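/- Let E be a Banach space such that every bounded linear operator from E into E* is completely continuous, E is not Schur, and E contains an isomorphic copy of ℓ¹. Then the symmetric projective tensor product E ⊗̂ₛ E does not have the Dunford–Pettis property. -/

import Mathlib

open Filter Topology Metric

/-- A sequence in a normed space is weakly null. -/
def WeaklyNull {E : Type*} [NormedAddCommGroup E] [NormedSpace ℝ E] (x : ℕ → E) : Prop :=
  ∀ φ : E →L[ℝ] ℝ, Tendsto (fun n => φ (x n)) atTop (𝓝 0)

/-- A bounded linear operator is completely continuous: it maps weakly null
sequences to norm null sequences. -/
def CompletelyContinuous {E F : Type*} [NormedAddCommGroup E] [NormedSpace ℝ E]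
    [NormedAddCommGroup F] [NormedSpace ℝ F] (T : E →L[ℝ] F) : Prop :=
  ∀ x : ℕ → E, WeaklyNull x → Tendsto (fun n => ‖T (x n)‖) atTop (𝓝 0)

/-- A bounded linear operator is weakly compact: the image of the closed unit
ball is relatively compact in the weak topology of the codomain. -/
def WeaklyCompactOp {E F : Type*} [NormedAddCommGroup E] [NormedSpace ℝ E]
    [NormedAddCommGroup F] [NormedSpace ℝ F] (T : E →L[ℝ] F) : Prop :=
  IsCompact (closure (toWeakSpace ℝ F '' (T '' closedBall (0 : E) 1)))

/-- The Dunford–Pettis property: every weakly compact operator into any Banach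
space is completely continuous. -/
def DunfordPettis (E : Type) [NormedAddCommGroup E] [NormedSpace ℝ E] : Prop :=
  ∀ (F : Type) [NormedAddCommGroup F] [NormedSpace ℝ F] [CompleteSpace F],
    ∀ T : E →L[ℝ] F, WeaklyCompactOp T → CompletelyContinuous T

/-- The Schur property: weakly null sequences are norm null. -/
def SchurProperty (E : Type*) [NormedAddCommGroup E] [NormedSpace ℝ E] : Prop :=
  ∀ x : ℕ → E, WeaklyNull x → Tendsto (fun n => ‖x n‖) atTop (𝓝 0)

/-- A topological space is scattered: every nonempty closed subset has a point
isolated in that subset. -/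
def Scattered (X : Type*) [TopologicalSpace X] : Prop :=
  ∀ C : Set X, IsClosed C → C.Nonempty → ∃ x ∈ C, 𝓝[C \ {x}] x = ⊥

/-- `X`, together with the bounded bilinear map `tmul`, is (a realization of) the completed
projective tensor product `E ⊗̂ F`, characterized by the universal property for bounded
bilinear maps together with the cross-norm property. -/
structure IsProjectiveTensorProduct (E F X : Type) [NormedAddCommGroup E] [NormedSpace ℝ E]
    [NormedAddCommGroup F] [NormedSpace ℝ F] [NormedAddCommGroup X] [NormedSpace ℝ X]
    [CompleteSpace X] (tmul : E →L[ℝ] F →L[ℝ] X) : Prop where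
  norm_tmul : ∀ f g, ‖tmul f g‖ = ‖f‖ * ‖g‖
  lift : ∀ (G : Type) [NormedAddCommGroup G] [NormedSpace ℝ G] [CompleteSpace G]
    (B : E →L[ℝ] F →L[ℝ] G),
    ∃! T : X →L[ℝ] G, (∀ f g, T (tmul f g) = B f g) ∧ ‖T‖ = ‖B‖

/-- `X`, together with the symmetric bounded bilinear map `tmul`, is (a realization of) the
2-fold symmetric projective tensor product `E ⊗̂ₛ E`, characterized by the universal property
for bounded symmetric bilinear maps. -/
structure IsSymmetricProjectiveTensorProduct2 (E X : Type) [NormedAddCommGroup E]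
    [NormedSpace ℝ E] [NormedAddCommGroup X] [NormedSpace ℝ X] [CompleteSpace X]
    (tmul : E →L[ℝ] E →L[ℝ] X) : Prop where
  symm : ∀ f g, tmul f g = tmul g f
  lift : ∀ (G : Type) [NormedAddCommGroup G] [NormedSpace ℝ G] [CompleteSpace G]
    (B : E →L[ℝ] E →L[ℝ] G), (∀ f g, B f g = B g f) →
    ∃! T : X →L[ℝ] G, ∀ f g, T (tmul f g) = B f g

/-- `X`, together with the bounded multilinear map `tmul`, is (a realization of) the completed
projective tensor product `E 0 ⊗̂ ⋯ ⊗̂ E (n-1)`, characterized by the universal property for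
bounded multilinear maps. -/
structure IsMultiProjectiveTensorProduct {n : ℕ} (E : Fin n → Type)
    [∀ i, NormedAddCommGroup (E i)] [∀ i, NormedSpace ℝ (E i)] (X : Type)
    [NormedAddCommGroup X] [NormedSpace ℝ X] [CompleteSpace X]
    (tmul : ContinuousMultilinearMap ℝ E X) : Prop where
  lift : ∀ (G : Type) [NormedAddCommGroup G] [NormedSpace ℝ G] [CompleteSpace G]
    (B : ContinuousMultilinearMap ℝ E G), ∃! T : X →L[ℝ] G, ∀ m, T (tmul m) = B m

/-- `X`, together with the symmetric bounded `n`-linear map `tmul`, is (a realization of) the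
`n`-fold symmetric projective tensor product `⊗̂_{n,s} E`, characterized by the universal
property for bounded symmetric `n`-linear maps. -/
structure IsSymmetricProjectiveTensorProduct (n : ℕ) (E : Type) [NormedAddCommGroup E]
    [NormedSpace ℝ E] (X : Type) [NormedAddCommGroup X] [NormedSpace ℝ X] [CompleteSpace X]
    (tmul : ContinuousMultilinearMap ℝ (fun _ : Fin n => E) X) : Prop where
  symm : ∀ (σ : Equiv.Perm (Fin n)) m, tmul (fun i => m (σ i)) = tmul m
  lift : ∀ (G : Type) [NormedAddCommGroup G] [NormedSpace ℝ G] [CompleteSpace G]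
    (B : ContinuousMultilinearMap ℝ (fun _ : Fin n => E) G),
    (∀ (σ : Equiv.Perm (Fin n)) m, B (fun i => m (σ i)) = B m) →
    ∃! T : X →L[ℝ] G, ∀ m, T (tmul m) = B m


open scoped ENNReal

namespace NotDPAux

noncomputable section

def rsgn (b : Bool) : ℝ := if b then 1 else -1
lemma abs_rsgn (b : Bool) : |rsgn b| = 1 := by cases b <;> simp [rsgn]
lemma rsgn_sq (b : Bool) : rsgn b * rsgn b = 1 := by cases b <;> simp [rsgn]
lemma rsgn_not (b : Bool) : rsgn (!b) = - rsgn b := by cases b <;> simp [rsgn]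

local notation "ℓ¹" => lp (fun _ : ℕ => ℝ) 1

lemma l1_partial_sum_le (a : ℓ¹) (s : Finset ℕ) : ∑ j ∈ s, |a j| ≤ ‖a‖ := by
  have hsum : Summable fun j => ‖a j‖ ^ ((1:ℝ≥0∞)).toReal := (lp.memℓp a).summable (by norm_num)
  have h : ‖a‖ = (∑' j, ‖a j‖ ^ ((1:ℝ≥0∞)).toReal) ^ (1 / ((1:ℝ≥0∞)).toReal) :=
    lp.norm_eq_tsum_rpow (by norm_num) a
  simp only [ENNReal.toReal_one, Real.rpow_one, one_div_one] at h hsum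
  rw [h]
  calc ∑ j ∈ s, |a j| = ∑ j ∈ s, ‖a j‖ := by simp [Real.norm_eq_abs]
  _ ≤ ∑' j, ‖a j‖ := hsum.sum_le_tsum s (fun i _ => norm_nonneg _)

def signFun (m : ℕ) (ε : ℕ → Bool) : ℓ¹ →ₗ[ℝ] ℝ where
  toFun a := ∑ j ∈ Finset.range m, rsgn (ε j) * a j
  map_add' a b := by
    simp only [lp.coeFn_add, Pi.add_apply, mul_add, Finset.sum_add_distrib]
  map_smul' r a := by
    simp only [lp.coeFn_smul, Pi.smul_apply, smul_eq_mul, RingHom.id_apply, Finset.mul_sum]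
    exact Finset.sum_congr rfl fun j _ => by ring

@[simp] lemma signFun_apply (m : ℕ) (ε : ℕ → Bool) (a : ℓ¹) :
    signFun m ε a = ∑ j ∈ Finset.range m, rsgn (ε j) * a j := rfl

lemma abs_signFun_le (m : ℕ) (ε : ℕ → Bool) (a : ℓ¹) : |signFun m ε a| ≤ ‖a‖ := by
  refine le_trans ?_ (l1_partial_sum_le a (Finset.range m))
  rw [signFun_apply]
  refine le_trans (Finset.abs_sum_le_sum_abs _ _) ?_
  refine Finset.sum_le_sum fun j _ => ?_
  rw [abs_mul, abs_rsgn, one_mul]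

def extB (m : ℕ) (ε : Fin m → Bool) : ℕ → Bool := fun j => if h : j < m then ε ⟨j, h⟩ else false
def coefR (m k : ℕ) (ε : Fin m → Bool) : ℝ := if h : k < m then rsgn (ε ⟨k, h⟩) else 0

lemma abs_coefR_le (m k : ℕ) (ε : Fin m → Bool) : |coefR m k ε| ≤ 1 := by
  unfold coefR; split
  · rw [abs_rsgn]
  · simp

lemma card_bool_fun (m : ℕ) : (Finset.univ : Finset (Fin m → Bool)).card = 2 ^ m := by
  simp [Finset.card_univ]

lemma coefR_orth (m k j : ℕ) :
    ∑ ε : Fin m → Bool, coefR m k ε * coefR m j ε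
      = if k = j ∧ k < m then (2 ^ m : ℝ) else 0 := by
  by_cases hk : k < m
  · by_cases hkj : k = j
    · subst hkj
      rw [if_pos ⟨rfl, hk⟩]
      have : ∀ ε : Fin m → Bool, coefR m k ε * coefR m k ε = 1 := by
        intro ε; rw [coefR, dif_pos hk, rsgn_sq]
      rw [Finset.sum_congr rfl fun ε _ => this ε, Finset.sum_const, card_bool_fun]
      simp
    · by_cases hj : j < m
      · rw [if_neg (by tauto)]
        set i : Fin m := ⟨k, hk⟩
        set i' : Fin m := ⟨j, hj⟩
        have hii' : i' ≠ i := by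
          simp only [i, i', Ne, Fin.mk.injEq]
          exact fun h => hkj (h.symm)
        refine Finset.sum_ninvolution (fun ε => Function.update ε i (!(ε i))) ?_ ?_
          (fun _ => Finset.mem_univ _) ?_
        · intro ε
          have h1 : coefR m k (Function.update ε i (!(ε i))) = - coefR m k ε := by
            rw [coefR, coefR, dif_pos hk, dif_pos hk]
            show rsgn (Function.update ε i (!(ε i)) i) = - rsgn (ε i)
            rw [Function.update_self, rsgn_not]
          have h2 : coefR m j (Function.update ε i (!(ε i))) = coefR m j ε := by
            rw [coefR, coefR, dif_pos hj, dif_pos hj]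
            show rsgn (Function.update ε i (!(ε i)) i') = rsgn (ε i')
            rw [Function.update_of_ne hii']
          rw [h1, h2]; ring
        · intro ε _
          intro hcon
          have := congrFun hcon i
          simp only [Function.update_self] at this
          exact (ε i).not_ne_self this
        · intro ε
          funext j'
          by_cases hj' : j' = i
          · subst hj'
            simp [Function.update_self, Bool.not_not]
          · simp [Function.update_of_ne hj']
      · rw [if_neg (by tauto)]
        refine Finset.sum_eq_zero fun ε _ => ?_
        have : coefR m j ε = 0 := by rw [coefR, dif_neg hj]
        rw [this, mul_zero]
  · rw [if_neg (by tauto)]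
    refine Finset.sum_eq_zero fun ε _ => ?_
    have : coefR m k ε = 0 := by rw [coefR, dif_neg hk]
    rw [this, zero_mul]

section Avg
variable {E : Type} [NormedAddCommGroup E] [NormedSpace ℝ E]

def Aavg (Φf : ℕ → (ℕ → Bool) → (E →L[ℝ] ℝ)) (m k : ℕ) : E →L[ℝ] ℝ :=
  ((2 : ℝ) ^ m)⁻¹ • ∑ ε : Fin m → Bool, coefR m k ε • Φf m (extB m ε)

lemma Aavg_apply (Φf : ℕ → (ℕ → Bool) → (E →L[ℝ] ℝ)) (m k : ℕ) (f : E) :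
    Aavg Φf m k f = ((2 : ℝ) ^ m)⁻¹ * ∑ ε : Fin m → Bool, coefR m k ε * Φf m (extB m ε) f := by
  simp [Aavg, ContinuousLinearMap.sum_apply, smul_eq_mul]

lemma Aavg_zero (Φf : ℕ → (ℕ → Bool) → (E →L[ℝ] ℝ)) {m k : ℕ} (hk : ¬ k < m) (f : E) :
    Aavg Φf m k f = 0 := by
  rw [Aavg_apply]
  have : ∀ ε : Fin m → Bool, coefR m k ε * Φf m (extB m ε) f = 0 := by
    intro ε
    have : coefR m k ε = 0 := by rw [coefR, dif_neg hk]
    rw [this, zero_mul]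
  rw [Finset.sum_congr rfl fun ε _ => this ε, Finset.sum_const_zero, mul_zero]

lemma Aavg_abs_le (Φf : ℕ → (ℕ → Bool) → (E →L[ℝ] ℝ)) {M : ℝ} (f : E)
    (hΦb : ∀ m ε, |(Φf m ε) f| ≤ M) (m k : ℕ) : |Aavg Φf m k f| ≤ M := by
  have hM : 0 ≤ M := le_trans (abs_nonneg _) (hΦb 0 (extB 0 (fun i => false)))
  rw [Aavg_apply, abs_mul, abs_inv, abs_pow, abs_two]
  have h1 : |∑ ε : Fin m → Bool, coefR m k ε * Φf m (extB m ε) f| ≤ (2:ℝ)^m * M := by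
    refine le_trans (Finset.abs_sum_le_sum_abs _ _) ?_
    have : ∀ ε : Fin m → Bool, |coefR m k ε * Φf m (extB m ε) f| ≤ M := by
      intro ε
      rw [abs_mul]
      calc |coefR m k ε| * |Φf m (extB m ε) f| ≤ 1 * M :=
        mul_le_mul (abs_coefR_le m k ε) (hΦb m (extB m ε)) (abs_nonneg _) zero_le_one
      _ = M := one_mul M
    refine le_trans (Finset.sum_le_sum fun ε _ => this ε) ?_
    rw [Finset.sum_const, card_bool_fun]
    simp [mul_comm]
  calc ((2:ℝ)^m)⁻¹ * |∑ ε : Fin m → Bool, coefR m k ε * Φf m (extB m ε) f|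
      ≤ ((2:ℝ)^m)⁻¹ * ((2:ℝ)^m * M) := by
        refine mul_le_mul_of_nonneg_left h1 (by positivity)
  _ = M := by field_simp

lemma Aavg_bessel (Φf : ℕ → (ℕ → Bool) → (E →L[ℝ] ℝ)) {M : ℝ} (f : E)
    (hΦb : ∀ m ε, |(Φf m ε) f| ≤ M) (m : ℕ) (s : Finset ℕ) :
    ∑ k ∈ s, (Aavg Φf m k f) ^ 2 ≤ M ^ 2 := by
  classical
  have hM : 0 ≤ M := le_trans (abs_nonneg _) (hΦb 0 (extB 0 (fun i => false)))
  set N : ℝ := (2:ℝ)^m with hN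
  have hNpos : 0 < N := by positivity
  set F : (Fin m → Bool) → ℝ := fun ε => Φf m (extB m ε) f with hF
  set cc : ℕ → ℝ := fun k => Aavg Φf m k f with hcc
  set G : (Fin m → Bool) → ℝ := fun ε => ∑ k ∈ s, cc k * coefR m k ε with hG
  set S : ℝ := ∑ k ∈ s, cc k ^ 2 with hS
  have hcapp : ∀ k, cc k = N⁻¹ * ∑ ε : Fin m → Bool, coefR m k ε * F ε := fun k => Aavg_apply ..
  have hSnn : 0 ≤ S := Finset.sum_nonneg fun k _ => sq_nonneg _
  -- step 1 : S = N⁻¹ * ∑ ε, F ε * G ε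
  have step1 : S = N⁻¹ * ∑ ε : Fin m → Bool, F ε * G ε := by
    have : ∀ k ∈ s, cc k ^ 2 = N⁻¹ * ∑ ε : Fin m → Bool, (F ε * (cc k * coefR m k ε)) := by
      intro k _
      nth_rewrite 1 [sq]
      nth_rewrite 2 [hcapp k]
      rw [mul_left_comm, Finset.mul_sum]
      congr 1
      exact Finset.sum_congr rfl fun ε _ => by ring
    rw [hS, Finset.sum_congr rfl this, ← Finset.mul_sum, Finset.sum_comm]
    congr 1
    refine Finset.sum_congr rfl fun ε _ => ?_
    rw [hG, Finset.mul_sum]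
  -- step 2 : ∑ ε, G ε ^ 2 = N * S
  have step2 : ∑ ε : Fin m → Bool, G ε ^ 2 = N * S := by
    have expand : ∀ ε : Fin m → Bool, G ε ^ 2
        = ∑ k ∈ s, ∑ j ∈ s, cc k * cc j * (coefR m k ε * coefR m j ε) := by
      intro ε
      rw [sq, hG, Finset.sum_mul_sum]
      exact Finset.sum_congr rfl fun k _ => Finset.sum_congr rfl fun j _ => by ring
    rw [Finset.sum_congr rfl fun ε _ => expand ε, Finset.sum_comm]
    have swap2 : ∀ k ∈ s, ∑ ε : Fin m → Bool, ∑ j ∈ s, cc k * cc j * (coefR m k ε * coefR m j ε)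
        = ∑ j ∈ s, cc k * cc j * (∑ ε : Fin m → Bool, coefR m k ε * coefR m j ε) := by
      intro k _
      rw [Finset.sum_comm]
      exact Finset.sum_congr rfl fun j _ => by rw [← Finset.mul_sum]
    rw [Finset.sum_congr rfl swap2]
    have diag : ∀ k ∈ s, ∑ j ∈ s, cc k * cc j * (∑ ε : Fin m → Bool, coefR m k ε * coefR m j ε)
        = N * cc k ^ 2 := by
      intro k hk
      have inner : ∀ j ∈ s, cc k * cc j * (∑ ε : Fin m → Bool, coefR m k ε * coefR m j ε)
          = if j = k then N * cc k ^ 2 else 0 := by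
        intro j _
        rw [coefR_orth]
        by_cases hjk : j = k
        · subst hjk
          by_cases hjm : j < m
          · rw [if_pos ⟨rfl, hjm⟩, if_pos rfl]; ring
          · rw [if_neg (by tauto), if_pos rfl, mul_zero]
            have : cc j = 0 := Aavg_zero Φf hjm f
            rw [this]; ring
        · rw [if_neg (by intro h; exact hjk h.1.symm), if_neg hjk, mul_zero]
      rw [Finset.sum_congr rfl inner, Finset.sum_ite_eq' s k (fun _ => N * cc k ^ 2), if_pos hk]
    rw [Finset.sum_congr rfl diag, ← Finset.mul_sum]
  -- F bound
  have hF2 : ∑ ε : Fin m → Bool, F ε ^ 2 ≤ N * M ^ 2 := by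
    have : ∀ ε : Fin m → Bool, F ε ^ 2 ≤ M ^ 2 := by
      intro ε
      have := hΦb m (extB m ε)
      exact sq_le_sq' (by rw [abs_le] at this; linarith [this.1]) (le_trans (le_abs_self _) this)
    refine le_trans (Finset.sum_le_sum fun ε _ => this ε) ?_
    rw [Finset.sum_const, card_bool_fun]
    simp [hN, mul_comm]
  -- Cauchy-Schwarz
  have cs : (∑ ε : Fin m → Bool, F ε * G ε) ^ 2
      ≤ (∑ ε : Fin m → Bool, F ε ^ 2) * ∑ ε : Fin m → Bool, G ε ^ 2 :=
    Finset.sum_mul_sq_le_sq_mul_sq _ _ _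
  have key : S ^ 2 ≤ M ^ 2 * S := by
    have h1 : S ^ 2 = N⁻¹ ^ 2 * (∑ ε : Fin m → Bool, F ε * G ε) ^ 2 := by
      rw [step1]; ring
    have h2 : (∑ ε : Fin m → Bool, F ε ^ 2) * (∑ ε : Fin m → Bool, G ε ^ 2)
        ≤ (N * M ^ 2) * (N * S) := by
      rw [step2]
      refine mul_le_mul_of_nonneg_right hF2 ?_
      rw [← step2]
      exact Finset.sum_nonneg fun ε _ => sq_nonneg _
    calc S ^ 2 = N⁻¹ ^ 2 * (∑ ε : Fin m → Bool, F ε * G ε) ^ 2 := h1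
    _ ≤ N⁻¹ ^ 2 * ((∑ ε : Fin m → Bool, F ε ^ 2) * ∑ ε : Fin m → Bool, G ε ^ 2) := by
        exact mul_le_mul_of_nonneg_left cs (by positivity)
    _ ≤ N⁻¹ ^ 2 * ((N * M ^ 2) * (N * S)) := mul_le_mul_of_nonneg_left h2 (by positivity)
    _ = M ^ 2 * S := by field_simp
  rcases eq_or_lt_of_le hSnn with h | h
  · rw [← h]; positivity
  · have h2 : S * S ≤ M ^ 2 * S := by rw [← sq]; exact key
    exact le_of_mul_le_mul_right h2 h

end Avg

section Ext
variable {E : Type} [NormedAddCommGroup E] [NormedSpace ℝ E]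

lemma exists_sign_extension {J : (lp (fun _ : ℕ => ℝ) 1) →L[ℝ] E} {c : ℝ}
    (hc : 0 < c) (hJ : ∀ x, c * ‖x‖ ≤ ‖J x‖) (m : ℕ) (ε : ℕ → Bool) :
    ∃ Φ : E →L[ℝ] ℝ, ‖Φ‖ ≤ 1 / c ∧ ∀ a, Φ (J a) = signFun m ε a := by
  have hinj : Function.Injective (J.toLinearMap) := by
    rw [injective_iff_map_eq_zero]
    intro a ha
    have h1 := hJ a
    rw [show J a = 0 from ha, norm_zero] at h1
    have h2 : ‖a‖ ≤ 0 := by nlinarith [norm_nonneg a]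
    exact norm_le_zero_iff.mp h2
  set p : Subspace ℝ E := LinearMap.range J.toLinearMap with hp
  set e : (lp (fun _ : ℕ => ℝ) 1) ≃ₗ[ℝ] p := LinearEquiv.ofInjective J.toLinearMap hinj with he
  set g₀ : p →ₗ[ℝ] ℝ := (signFun m ε).comp (e.symm : p →ₗ[ℝ] lp (fun _ : ℕ => ℝ) 1) with hg₀
  have hbound : ∀ y : p, ‖g₀ y‖ ≤ (1 / c) * ‖y‖ := by
    intro y
    have hy : J (e.symm y) = (y : E) := by
      have h1 := e.apply_symm_apply y
      have h2 : (e (e.symm y) : E) = (y : E) := by rw [h1]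
      rwa [he, LinearEquiv.ofInjective_apply] at h2
    have h3 : ‖g₀ y‖ = |signFun m ε (e.symm y)| := rfl
    have h4 : c * ‖e.symm y‖ ≤ ‖J (e.symm y)‖ := hJ _
    rw [hy] at h4
    calc ‖g₀ y‖ = |signFun m ε (e.symm y)| := h3
    _ ≤ ‖e.symm y‖ := abs_signFun_le _ _ _
    _ ≤ (1 / c) * ‖(y : E)‖ := by
        rw [show (1 / c) * ‖(y : E)‖ = ‖(y : E)‖ / c by ring, le_div_iff₀ hc]
        calc ‖e.symm y‖ * c = c * ‖e.symm y‖ := mul_comm _ _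
        _ ≤ ‖(y : E)‖ := h4
    _ = (1 / c) * ‖y‖ := rfl
  set g : p →L[ℝ] ℝ := LinearMap.mkContinuous g₀ (1 / c) hbound with hg
  obtain ⟨Φ, hres, hnorm⟩ := exists_extension_norm_eq p g
  refine ⟨Φ, ?_, ?_⟩
  · rw [hnorm]
    exact LinearMap.mkContinuous_norm_le _ (by positivity) _
  · intro a
    have hmem : J a ∈ p := ⟨a, rfl⟩
    have h4 := hres ⟨J a, hmem⟩
    have h5 : e.symm ⟨J a, hmem⟩ = a := by
      apply e.injective
      rw [e.apply_symm_apply]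
      apply Subtype.ext
      rw [he, LinearEquiv.ofInjective_apply]
      rfl
    have h4' : Φ (J a) = g ⟨J a, hmem⟩ := by simpa using h4
    calc Φ (J a) = g ⟨J a, hmem⟩ := h4'
    _ = signFun m ε (e.symm ⟨J a, hmem⟩) := rfl
    _ = signFun m ε a := by rw [h5]

lemma Aavg_biorth (Φf : ℕ → (ℕ → Bool) → (E →L[ℝ] ℝ)) (J : (lp (fun _ : ℕ => ℝ) 1) →L[ℝ] E)
    (hΦval : ∀ m ε a, Φf m ε (J a) = signFun m ε a) {m k j : ℕ} (hk : k < m) (hj : j < m) :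
    Aavg Φf m k (J (lp.single 1 j 1)) = if k = j then 1 else 0 := by
  have hFval : ∀ ε : Fin m → Bool, Φf m (extB m ε) (J (lp.single 1 j 1)) = coefR m j ε := by
    intro ε
    rw [hΦval, signFun_apply]
    rw [Finset.sum_eq_single j]
    · rw [lp.single_apply_self, mul_one, coefR, dif_pos hj]
      congr 1
      rw [extB, dif_pos hj]
    · intro i _ hij
      rw [lp.single_apply_ne 1 j _ hij, mul_zero]
    · intro hjm
      exact absurd (Finset.mem_range.mpr hj) hjm
  rw [Aavg_apply, Finset.sum_congr rfl fun ε _ => by rw [hFval ε], coefR_orth]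
  by_cases hkj : k = j
  · rw [if_pos ⟨hkj, hk⟩, if_pos hkj]
    field_simp
  · rw [if_neg (by tauto), if_neg hkj, mul_zero]

end Ext

section QQ
variable {E : Type} [NormedAddCommGroup E] [NormedSpace ℝ E]

lemma exists_bessel_family (J : (lp (fun _ : ℕ => ℝ) 1) →L[ℝ] E) {c : ℝ}
    (hc : 0 < c) (hJ : ∀ x, c * ‖x‖ ≤ ‖J x‖) :
    ∃ q : ℕ → E →L[ℝ] ℝ,
      (∀ (f : E) (s : Finset ℕ), ∑ k ∈ s, (q k f) ^ 2 ≤ (‖f‖ / c) ^ 2) ∧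
      (∀ k j, q k (J (lp.single 1 j 1)) = if k = j then 1 else 0) := by
  choose Φf hΦnorm hΦval using fun m ε => exists_sign_extension hc hJ m ε
  have hΦb : ∀ (f : E) (m : ℕ) (ε : ℕ → Bool), |Φf m ε f| ≤ ‖f‖ / c := by
    intro f m ε
    calc |Φf m ε f| = ‖Φf m ε f‖ := (Real.norm_eq_abs _).symm
    _ ≤ ‖Φf m ε‖ * ‖f‖ := (Φf m ε).le_opNorm f
    _ ≤ (1 / c) * ‖f‖ := mul_le_mul_of_nonneg_right (hΦnorm m ε) (norm_nonneg f)
    _ = ‖f‖ / c := by ring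
  set U : Ultrafilter ℕ := Ultrafilter.of atTop with hUdef
  have hUle : (U : Filter ℕ) ≤ atTop := Ultrafilter.of_le _
  have hlim : ∀ (k : ℕ) (f : E), ∃ x : ℝ,
      Tendsto (fun m => Aavg Φf m k f) (U : Filter ℕ) (𝓝 x) := by
    intro k f
    set M : ℝ := ‖f‖ / c with hM
    have hmem : ∀ m : ℕ, Aavg Φf m k f ∈ Set.Icc (-M) M := by
      intro m
      have h := Aavg_abs_le Φf f (fun m' ε => hΦb f m' ε) m k
      rw [abs_le] at h
      exact ⟨h.1, h.2⟩
    have hle : (Ultrafilter.map (fun m => Aavg Φf m k f) U : Filter ℝ)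
        ≤ 𝓟 (Set.Icc (-M) M) := by
      rw [le_principal_iff]
      exact Filter.mem_map.mpr (Filter.univ_mem' hmem)
    obtain ⟨x, -, hx⟩ := isCompact_Icc.ultrafilter_le_nhds _ hle
    exact ⟨x, hx⟩
  choose q0 hq0 using hlim
  have hadd : ∀ k (f g : E), q0 k (f + g) = q0 k f + q0 k g := by
    intro k f g
    refine tendsto_nhds_unique (hq0 k (f + g)) ?_
    exact (((hq0 k f).add (hq0 k g)).congr fun m => (map_add (Aavg Φf m k) f g).symm)
  have hsmul : ∀ k (r : ℝ) (f : E), q0 k (r • f) = r • q0 k f := by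
    intro k r f
    refine tendsto_nhds_unique (hq0 k (r • f)) ?_
    have := (hq0 k f).const_mul r
    refine this.congr fun m => ?_
    rw [map_smul]
    simp [smul_eq_mul]
  have habs : ∀ k (f : E), |q0 k f| ≤ ‖f‖ / c := by
    intro k f
    refine le_of_tendsto (hq0 k f).abs (Filter.Eventually.of_forall fun m => ?_)
    exact Aavg_abs_le Φf f (fun m' ε => hΦb f m' ε) m k
  set q : ℕ → E →L[ℝ] ℝ := fun k =>
    LinearMap.mkContinuous ⟨⟨q0 k, hadd k⟩, hsmul k⟩ (1 / c)
      (fun f => by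
        rw [Real.norm_eq_abs]
        calc |q0 k f| ≤ ‖f‖ / c := habs k f
        _ = (1 / c) * ‖f‖ := by ring) with hqdef
  have hqapp : ∀ k (f : E), q k f = q0 k f := fun k f => rfl
  refine ⟨q, ?_, ?_⟩
  · intro f s
    have ht : Tendsto (fun m => ∑ k ∈ s, (Aavg Φf m k f) ^ 2) (U : Filter ℕ)
        (𝓝 (∑ k ∈ s, (q0 k f) ^ 2)) := by
      refine tendsto_finset_sum s fun k _ => ?_
      exact (hq0 k f).pow 2
    have := le_of_tendsto ht (Filter.Eventually.of_forall fun m =>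
      Aavg_bessel Φf f (fun m' ε => hΦb f m' ε) m s)
    simpa [hqapp] using this
  · intro k j
    have hev : ∀ᶠ m in atTop,
        Aavg Φf m k (J (lp.single 1 j 1)) = (if k = j then (1:ℝ) else 0) := by
      refine Filter.eventually_atTop.mpr ⟨max k j + 1, fun m hm => ?_⟩
      have hk : k < m := lt_of_le_of_lt (le_max_left k j) (Nat.lt_of_succ_le hm)
      have hj : j < m := lt_of_le_of_lt (le_max_right k j) (Nat.lt_of_succ_le hm)
      exact Aavg_biorth Φf J (fun m' ε a => hΦval m' ε a) hk hj
    have hev' : (fun m => Aavg Φf m k (J (lp.single 1 j 1)))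
        =ᶠ[(U : Filter ℕ)] (fun _ => (if k = j then (1:ℝ) else 0)) := hUle hev
    have ht : Tendsto (fun m => Aavg Φf m k (J (lp.single 1 j 1))) (U : Filter ℕ)
        (𝓝 (if k = j then (1:ℝ) else 0)) := by
      exact Tendsto.congr' hev'.symm tendsto_const_nhds
    rw [hqapp]
    exact tendsto_nhds_unique (hq0 k _) ht

end QQ

section Bil
variable {E : Type} [NormedAddCommGroup E] [NormedSpace ℝ E]

lemma ennreal_two_toReal : ((2:ℝ≥0∞)).toReal = 2 := by simp

lemma exists_symm_bilinear (ξ q : ℕ → E →L[ℝ] ℝ) {c : ℝ} (hc : 0 < c)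
    (hξ : ∀ k, ‖ξ k‖ ≤ 1)
    (hq : ∀ (f : E) (s : Finset ℕ), ∑ k ∈ s, (q k f) ^ 2 ≤ (‖f‖ / c) ^ 2) :
    ∃ B : E →L[ℝ] E →L[ℝ] (lp (fun _ : ℕ => ℝ) 2),
      (∀ f g, B f g = B g f) ∧
      (∀ (f g : E) (k : ℕ), (B f g : ∀ _ : ℕ, ℝ) k
          = (ξ k f * q k g + ξ k g * q k f) / 2) := by
  classical
  set b : E → E → ℕ → ℝ := fun f g k => (ξ k f * q k g + ξ k g * q k f) / 2 with hb
  have hxibound : ∀ (f : E) (k : ℕ), (ξ k f) ^ 2 ≤ ‖f‖ ^ 2 := by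
    intro f k
    have h1 : |ξ k f| ≤ ‖f‖ := by
      calc |ξ k f| = ‖ξ k f‖ := (Real.norm_eq_abs _).symm
      _ ≤ ‖ξ k‖ * ‖f‖ := (ξ k).le_opNorm f
      _ ≤ 1 * ‖f‖ := mul_le_mul_of_nonneg_right (hξ k) (norm_nonneg f)
      _ = ‖f‖ := one_mul _
    calc (ξ k f) ^ 2 = |ξ k f| ^ 2 := (sq_abs _).symm
    _ ≤ ‖f‖ ^ 2 := pow_le_pow_left₀ (abs_nonneg _) h1 2
  have hsum1 : ∀ (f g : E) (s : Finset ℕ),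
      ∑ k ∈ s, (ξ k f * q k g) ^ 2 ≤ ‖f‖ ^ 2 * (‖g‖ / c) ^ 2 := by
    intro f g s
    calc ∑ k ∈ s, (ξ k f * q k g) ^ 2 = ∑ k ∈ s, (ξ k f) ^ 2 * (q k g) ^ 2 := by
          exact Finset.sum_congr rfl fun k _ => by ring
    _ ≤ ∑ k ∈ s, ‖f‖ ^ 2 * (q k g) ^ 2 := by
          refine Finset.sum_le_sum fun k _ => ?_
          exact mul_le_mul_of_nonneg_right (hxibound f k) (sq_nonneg _)
    _ = ‖f‖ ^ 2 * ∑ k ∈ s, (q k g) ^ 2 := by rw [← Finset.mul_sum]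
    _ ≤ ‖f‖ ^ 2 * (‖g‖ / c) ^ 2 := mul_le_mul_of_nonneg_left (hq g s) (sq_nonneg _)
  have hsum : ∀ (f g : E) (s : Finset ℕ),
      ∑ k ∈ s, (b f g k) ^ 2 ≤ (‖f‖ * ‖g‖ / c) ^ 2 := by
    intro f g s
    have hterm : ∀ k, (b f g k) ^ 2 ≤ ((ξ k f * q k g) ^ 2 + (ξ k g * q k f) ^ 2) / 2 := by
      intro k
      rw [hb]
      have := sq_nonneg (ξ k f * q k g - ξ k g * q k f)
      nlinarith [this]
    calc ∑ k ∈ s, (b f g k) ^ 2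
        ≤ ∑ k ∈ s, ((ξ k f * q k g) ^ 2 + (ξ k g * q k f) ^ 2) / 2 :=
          Finset.sum_le_sum fun k _ => hterm k
    _ = (∑ k ∈ s, (ξ k f * q k g) ^ 2) / 2 + (∑ k ∈ s, (ξ k g * q k f) ^ 2) / 2 := by
          rw [← Finset.sum_div, Finset.sum_add_distrib, add_div]
    _ ≤ (‖f‖ ^ 2 * (‖g‖ / c) ^ 2) / 2 + (‖g‖ ^ 2 * (‖f‖ / c) ^ 2) / 2 := by
          have h1 := hsum1 f g s
          have h2 := hsum1 g f s
          linarith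
    _ = (‖f‖ * ‖g‖ / c) ^ 2 := by field_simp; ring
  have hCnn : ∀ (f g : E), (0:ℝ) ≤ ‖f‖ * ‖g‖ / c := by
    intro f g; positivity
  have hnorm_sum : ∀ (f g : E) (s : Finset ℕ),
      ∑ k ∈ s, ‖b f g k‖ ^ ((2:ℝ≥0∞)).toReal ≤ (‖f‖ * ‖g‖ / c) ^ ((2:ℝ≥0∞)).toReal := by
    intro f g s
    rw [ennreal_two_toReal]
    have : ∀ k, ‖b f g k‖ ^ (2:ℝ) = (b f g k) ^ 2 := by
      intro k
      rw [show (2:ℝ) = ((2:ℕ):ℝ) by norm_num, Real.rpow_natCast, Real.norm_eq_abs, sq_abs]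
    rw [Finset.sum_congr rfl fun k _ => this k]
    rw [show ((‖f‖ * ‖g‖ / c) ^ (2:ℝ)) = (‖f‖ * ‖g‖ / c) ^ (2:ℕ) by
      rw [show (2:ℝ) = ((2:ℕ):ℝ) by norm_num, Real.rpow_natCast]]
    exact hsum f g s
  have hmem : ∀ (f g : E), Memℓp (b f g) 2 := by
    intro f g
    exact memℓp_gen' (hnorm_sum f g)
  set Bf : E → E → lp (fun _ : ℕ => ℝ) 2 := fun f g => ⟨b f g, hmem f g⟩ with hBf
  have hBfapp : ∀ (f g : E) (k : ℕ), (Bf f g : ∀ _ : ℕ, ℝ) k = b f g k := fun f g k => rfl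
  have hBfnorm : ∀ (f g : E), ‖Bf f g‖ ≤ ‖f‖ * ‖g‖ / c := by
    intro f g
    refine lp.norm_le_of_forall_sum_le (by rw [ennreal_two_toReal]; norm_num)
      (hCnn f g) ?_
    exact hnorm_sum f g
  set BL : E →ₗ[ℝ] E →ₗ[ℝ] lp (fun _ : ℕ => ℝ) 2 := LinearMap.mk₂ ℝ Bf
    (by
      intro f f' g
      apply lp.ext
      funext k
      simp only [lp.coeFn_add, Pi.add_apply, hBfapp, hb]
      rw [map_add, map_add]
      ring)
    (by
      intro r f g
      apply lp.ext
      funext k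
      simp only [lp.coeFn_smul, Pi.smul_apply, hBfapp, hb, smul_eq_mul]
      rw [map_smul, map_smul]
      simp only [smul_eq_mul]
      ring)
    (by
      intro f g g'
      apply lp.ext
      funext k
      simp only [lp.coeFn_add, Pi.add_apply, hBfapp, hb]
      rw [map_add, map_add]
      ring)
    (by
      intro r f g
      apply lp.ext
      funext k
      simp only [lp.coeFn_smul, Pi.smul_apply, hBfapp, hb, smul_eq_mul]
      rw [map_smul, map_smul]
      simp only [smul_eq_mul]
      ring) with hBL
  have hBLapp : ∀ f g, BL f g = Bf f g := fun f g => rfl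
  set B : E →L[ℝ] E →L[ℝ] lp (fun _ : ℕ => ℝ) 2 :=
    LinearMap.mkContinuous₂ BL (1 / c)
      (fun f g => by
        rw [hBLapp]
        calc ‖Bf f g‖ ≤ ‖f‖ * ‖g‖ / c := hBfnorm f g
        _ = (1 / c) * ‖f‖ * ‖g‖ := by ring) with hB
  have hBapp : ∀ f g, B f g = Bf f g := fun f g => rfl
  refine ⟨B, ?_, ?_⟩
  · intro f g
    rw [hBapp, hBapp]
    apply lp.ext
    funext k
    simp only [hBfapp, hb]
    ring
  · intro f g k
    rw [hBapp, hBfapp, hb]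

end Bil


end

end NotDPAux

open NotDPAux

section MainAux
open Filter Topology Metric
variable {E : Type} [NormedAddCommGroup E] [NormedSpace ℝ E]

lemma weakspace_t2 {F : Type*} [NormedAddCommGroup F] [NormedSpace ℝ F] :
    T2Space (WeakSpace ℝ F) := by
  have hinj : Function.Injective (topDualPairing ℝ F).flip := by
    intro x y hxy
    rw [NormedSpace.eq_iff_forall_dual_eq ℝ]
    intro g
    exact congrArg (fun (f : StrongDual ℝ F →ₗ[ℝ] ℝ) => f g) hxy
  exact (WeakBilin.isEmbedding hinj).t2Space

lemma hilbert_ball_weakly_compact {H : Type*} [NormedAddCommGroup H] [InnerProductSpace ℝ H]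
    [CompleteSpace H] (r : ℝ) :
    IsCompact (toWeakSpace ℝ H '' closedBall (0 : H) r) := by
  set d := InnerProductSpace.toDual ℝ H with hd
  have hS : IsCompact (WeakDual.toStrongDual ⁻¹' closedBall (0 : StrongDual ℝ H) r) :=
    WeakDual.isCompact_closedBall 0 r
  set Ψ : WeakDual ℝ H → WeakSpace ℝ H := fun φ => toWeakSpace ℝ H (d.symm φ) with hΨ
  have hcont : Continuous Ψ := by
    apply WeakBilin.continuous_of_continuous_eval
    intro ψ
    have key : ∀ φ : WeakDual ℝ H, ψ (d.symm φ) = φ (d.symm ψ) := by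
      intro φ
      have h1 : ψ (d.symm φ) = (inner ℝ (d.symm ψ) (d.symm φ) : ℝ) :=
        (InnerProductSpace.toDual_symm_apply).symm
      have h2 : φ (d.symm ψ) = (inner ℝ (d.symm φ) (d.symm ψ) : ℝ) :=
        (InnerProductSpace.toDual_symm_apply).symm
      rw [h1, h2, real_inner_comm]
    have heq : (fun φ : WeakDual ℝ H => (topDualPairing ℝ H).flip (Ψ φ) ψ)
        = fun φ : WeakDual ℝ H => φ (d.symm ψ) := by
      funext φ
      exact key φ
    rw [heq]
    exact WeakBilin.eval_continuous _ _
  have himg : Ψ '' (WeakDual.toStrongDual ⁻¹' closedBall (0 : StrongDual ℝ H) r)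
      = toWeakSpace ℝ H '' closedBall (0 : H) r := by
    ext x
    constructor
    · rintro ⟨φ, hφ, rfl⟩
      refine ⟨d.symm φ, ?_, rfl⟩
      simp only [Set.mem_preimage, mem_closedBall, dist_zero_right] at hφ ⊢
      exact (d.symm.norm_map (WeakDual.toStrongDual φ)).trans_le hφ
    · rintro ⟨z, hz, rfl⟩
      refine ⟨d z, ?_, ?_⟩
      · simp only [Set.mem_preimage, mem_closedBall, dist_zero_right] at hz ⊢
        exact mem_closedBall_zero_iff.mpr ((d.norm_map z).trans_le hz)
      · simp [hΨ]
  rw [← himg]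
  exact hS.image hcont

lemma abs_le_of_sq_le_sq_aux (a b : ℝ) (h : a ^ 2 ≤ b ^ 2) (hb : 0 ≤ b) : |a| ≤ b :=
  abs_le_of_sq_le_sq h hb

end MainAux

/-- if every operator `E → E*` is completely continuous, `E` is not Schur and
`E` contains an isomorphic copy of `ℓ¹`, then `E ⊗̂ₛ E` fails the Dunford–Pettis property. -/
theorem not_dunfordPettis_symTensor_self
    (E : Type) [NormedAddCommGroup E] [NormedSpace ℝ E] [CompleteSpace E]
    (h₁ : ∀ T : E →L[ℝ] (E →L[ℝ] ℝ), CompletelyContinuous T)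
    (h₂ : ¬ SchurProperty E)
    (h₃ : ∃ J : lp (fun _ : ℕ => ℝ) 1 →L[ℝ] E, ∃ c > (0 : ℝ), ∀ x, c * ‖x‖ ≤ ‖J x‖)
    (X : Type) [NormedAddCommGroup X] [NormedSpace ℝ X] [CompleteSpace X]
    (tmul : E →L[ℝ] E →L[ℝ] X) (hX : IsSymmetricProjectiveTensorProduct2 E X tmul) :
    ¬ DunfordPettis X := by
  intro hDP
  obtain ⟨J, c, hc, hJ⟩ := h₃
  -- a normalized weakly null sequence
  rw [SchurProperty] at h₂
  push_neg at h₂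
  obtain ⟨x, hxw, hxn⟩ := h₂
  have hfreq : ∃ δ > (0:ℝ), ∀ N, ∃ n > N, δ ≤ ‖x n‖ := by
    by_contra hcon
    push_neg at hcon
    apply hxn
    rw [Metric.tendsto_atTop]
    intro δ hδ
    obtain ⟨N, hN⟩ := hcon δ hδ
    refine ⟨N + 1, fun n hn => ?_⟩
    rw [Real.dist_eq, sub_zero, abs_of_nonneg (norm_nonneg _)]
    exact hN n (lt_of_lt_of_le (Nat.lt_succ_self N) hn)
  obtain ⟨δ, hδ, hP⟩ := hfreq
  obtain ⟨φ, hφmono, hφ⟩ := Nat.exists_strictMono_subsequence hP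
  have hxpos : ∀ n, 0 < ‖x (φ n)‖ := fun n => lt_of_lt_of_le hδ (hφ n)
  set g : ℕ → E := fun n => ‖x (φ n)‖⁻¹ • x (φ n) with hgdef
  have hgnorm : ∀ n, ‖g n‖ = 1 := by
    intro n
    simp only [hgdef]
    simp only [norm_smul, Real.norm_eq_abs, abs_inv, abs_of_nonneg (norm_nonneg _)]
    exact inv_mul_cancel₀ (ne_of_gt (hxpos n))
  have hgweak : WeaklyNull g := by
    intro ψ
    have hb : ∀ n, ‖ψ (g n)‖ ≤ δ⁻¹ * ‖ψ (x (φ n))‖ := by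
      intro n
      simp only [hgdef]
      simp only [map_smul, smul_eq_mul, norm_mul, Real.norm_eq_abs, abs_inv,
        abs_of_nonneg (norm_nonneg _)]
      refine mul_le_mul_of_nonneg_right ?_ (abs_nonneg _)
      exact inv_anti₀ hδ (hφ n)
    have hlim : Tendsto (fun n => δ⁻¹ * ‖ψ (x (φ n))‖) atTop (𝓝 0) := by
      have h0 : Tendsto (fun n => ψ (x n)) atTop (𝓝 0) := hxw ψ
      have h1 : Tendsto (fun n => ψ (x (φ n))) atTop (𝓝 0) := h0.comp hφmono.tendsto_atTop
      have h2 := h1.norm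
      simp only [norm_zero] at h2
      simpa using h2.const_mul δ⁻¹
    exact squeeze_zero_norm hb hlim
  -- the ℓ¹ basis images and their properties
  set u : ℕ → E := fun n => J (lp.single 1 n 1) with hudef
  set K : ℝ := ‖J‖ with hKdef
  have hsingle : ∀ n : ℕ, ‖(lp.single 1 n (1:ℝ) : lp (fun _ : ℕ => ℝ) 1)‖ = 1 := by
    intro n
    have h := lp.norm_single (p := 1) (E := fun _ : ℕ => ℝ) (by norm_num)
      n (1:ℝ)
    simpa using h
  have hKc : c ≤ K := by
    have h1 := hJ (lp.single 1 0 1)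
    have h2 := J.le_opNorm (lp.single 1 0 1)
    rw [hsingle 0, mul_one] at h1 h2
    exact le_trans h1 h2
  have hKpos : 0 < K := lt_of_lt_of_le hc hKc
  have hu : ∀ n, ‖u n‖ ≤ K := by
    intro n
    simp only [hudef]
    calc ‖J (lp.single 1 n 1)‖ ≤ ‖J‖ * ‖(lp.single 1 n (1:ℝ) : lp (fun _ : ℕ => ℝ) 1)‖ :=
      J.le_opNorm _
    _ = K := by rw [hsingle n, mul_one]
  -- the Bessel family
  obtain ⟨q, hqB, hqbo⟩ := exists_bessel_family J hc hJ
  have hqabs : ∀ (k : ℕ) (f : E), |q k f| ≤ ‖f‖ / c := by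
    intro k f
    have h := hqB f {k}
    rw [Finset.sum_singleton] at h
    exact abs_le_of_sq_le_sq_aux _ _ h (by positivity)
  set α : ℕ → ℝ := fun n => q n (g n) with hαdef
  set v : ℕ → E := fun n => g n + α n • u n with hvdef
  set δ₀ : ℝ := min (1/2 : ℝ) (c / K) with hδ₀def
  have hδ₀pos : 0 < δ₀ := lt_min (by norm_num) (div_pos hc hKpos)
  have hqu : ∀ n, q n (u n) = 1 := by
    intro n
    simp only [hudef]
    have := hqbo n n
    simpa using this
  have hvlow : ∀ n, δ₀ ≤ ‖v n‖ := by
    intro n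
    by_cases hcase : |α n| ≤ 1 / (2 * K)
    · have h1 : ‖g n‖ - ‖α n • u n‖ ≤ ‖v n‖ := by
        have h := norm_sub_norm_le (g n) (-(α n • u n))
        rw [sub_neg_eq_add, norm_neg] at h
        simp only [hvdef]
        exact h
      have h2 : ‖α n • u n‖ ≤ 1/2 := by
        rw [norm_smul, Real.norm_eq_abs]
        calc |α n| * ‖u n‖ ≤ (1 / (2 * K)) * K :=
          mul_le_mul hcase (hu n) (norm_nonneg _) (by positivity)
        _ = 1/2 := by field_simp
      calc δ₀ ≤ 1/2 := min_le_left _ _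
      _ ≤ ‖v n‖ := by
          have := hgnorm n
          linarith
    · push_neg at hcase
      have hqv : q n (v n) = 2 * α n := by
        simp only [hvdef]
        simp only [map_add, map_smul, smul_eq_mul]
        rw [hqu n]
        simp only [hαdef]
        ring
      have h3 : |q n (v n)| ≤ ‖v n‖ / c := hqabs n (v n)
      rw [hqv, abs_mul, abs_two] at h3
      have h4 : 2 * |α n| * c ≤ ‖v n‖ := by
        rw [← le_div_iff₀ hc]
        exact h3
      calc δ₀ ≤ c / K := min_le_right _ _
      _ ≤ ‖v n‖ := by
          rw [div_lt_iff₀ (by positivity : (0:ℝ) < 2 * K)] at hcase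
          have h6 : c / K ≤ 2 * |α n| * c := by
            rw [div_le_iff₀ hKpos]
            nlinarith [hcase, hc]
          linarith
  have hvne : ∀ n, v n ≠ 0 := by
    intro n h
    have := hvlow n
    rw [h, norm_zero] at this
    linarith
  -- norming functionals
  have hξex : ∀ n, ∃ ξ : E →L[ℝ] ℝ, ‖ξ‖ = 1 ∧ ξ (v n) = ‖v n‖ := fun n =>
    exists_dual_vector ℝ (v n) (norm_ne_zero_iff.mpr (hvne n))
  choose ξ hξ1 hξv using hξex
  -- the bilinear map and its lift
  obtain ⟨B, hBsymm, hBcoord⟩ := exists_symm_bilinear ξ q hc (fun k => le_of_eq (hξ1 k)) hqB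
  obtain ⟨T, hT, -⟩ := hX.lift (lp (fun _ : ℕ => ℝ) 2) B hBsymm
  -- weak compactness of T
  have hwc : WeaklyCompactOp T := by
    unfold WeaklyCompactOp
    haveI : T2Space (WeakSpace ℝ (lp (fun _ : ℕ => ℝ) 2)) := weakspace_t2
    have hcomp := hilbert_ball_weakly_compact (H := lp (fun _ : ℕ => ℝ) 2) ‖T‖
    have hsub : toWeakSpace ℝ (lp (fun _ : ℕ => ℝ) 2) '' (T '' closedBall 0 1)
        ⊆ toWeakSpace ℝ (lp (fun _ : ℕ => ℝ) 2) '' closedBall 0 ‖T‖ := by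
      apply Set.image_mono
      rintro y ⟨z, hz, rfl⟩
      rw [mem_closedBall, dist_zero_right] at hz ⊢
      calc ‖T z‖ ≤ ‖T‖ * ‖z‖ := T.le_opNorm z
      _ ≤ ‖T‖ * 1 := mul_le_mul_of_nonneg_left hz (norm_nonneg T)
      _ = ‖T‖ := mul_one _
    exact hcomp.of_isClosed_subset isClosed_closure (closure_minimal hsub hcomp.isClosed)
  have hcc := hDP (lp (fun _ : ℕ => ℝ) 2) T hwc
  -- the weakly null sequence in X
  set xs : ℕ → X := fun n => tmul (g n) (u n) with hxsdef
  have hxsweak : WeaklyNull xs := by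
    intro ψ
    set Tψ : E →L[ℝ] (E →L[ℝ] ℝ) := (ContinuousLinearMap.compL ℝ E X ℝ ψ).comp tmul with hTψ
    have h0 : Tendsto (fun n => ‖Tψ (g n)‖) atTop (𝓝 0) := h₁ Tψ g hgweak
    have hb : ∀ n, ‖ψ (xs n)‖ ≤ ‖Tψ (g n)‖ * K := by
      intro n
      have heq : ψ (xs n) = (Tψ (g n)) (u n) := by
        rw [hTψ, hxsdef]
        simp [ContinuousLinearMap.compL_apply]
      rw [heq]
      calc ‖(Tψ (g n)) (u n)‖ ≤ ‖Tψ (g n)‖ * ‖u n‖ := (Tψ (g n)).le_opNorm _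
      _ ≤ ‖Tψ (g n)‖ * K := mul_le_mul_of_nonneg_left (hu n) (norm_nonneg _)
    have hlim : Tendsto (fun n => ‖Tψ (g n)‖ * K) atTop (𝓝 0) := by
      simpa using h0.mul_const K
    exact squeeze_zero_norm hb hlim
  have hT0 := hcc xs hxsweak
  -- lower bound on ‖T (xs n)‖
  have hlow : ∀ n, δ₀ / 2 ≤ ‖T (xs n)‖ := by
    intro n
    have hqg : q n (g n) = α n := by simp only [hαdef]
    have hcoord : (B (g n) (u n) : ∀ _ : ℕ, ℝ) n = ‖v n‖ / 2 := by
      rw [hBcoord]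
      rw [hqu n, hqg]
      have h3 : ξ n (g n) + ξ n (u n) * α n = ‖v n‖ := by
        have h := hξv n
        simp only [hvdef] at h
        simp only [map_add, map_smul, smul_eq_mul] at h
        linarith
      rw [mul_one]
      rw [← h3]
    have h4 : ‖(B (g n) (u n) : ∀ _ : ℕ, ℝ) n‖ ≤ ‖B (g n) (u n)‖ :=
      lp.norm_apply_le_norm (by norm_num) (B (g n) (u n)) n
    rw [hcoord, Real.norm_eq_abs, abs_of_nonneg (by positivity)] at h4
    have h5 : T (xs n) = B (g n) (u n) := by
      simp only [hxsdef]
      exact hT (g n) (u n)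
    rw [h5]
    calc δ₀ / 2 ≤ ‖v n‖ / 2 := by linarith [hvlow n]
    _ ≤ ‖B (g n) (u n)‖ := h4
  -- contradiction
  have hev : ∀ᶠ n in atTop, ‖T (xs n)‖ < δ₀ / 2 :=
    hT0.eventually (gt_mem_nhds (by positivity : (0:ℝ) < δ₀ / 2))
  obtain ⟨n, hn⟩ := hev.exists
  linarith [hlow n]
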